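/- arXiv:2303.07934 — 3 statements merged into one kernel-verified Lean document; each statement's English description precedes it below -/
import Mathlib

section
/- For a prime p and integer q ≥ 1, the sum S_q(p) = Σ_{k=1}^{p-1} ⌊k^(2q+1)/p⌋ satisfies 2·S_q(p) = Σ_{k=1}^{p-1} Σ_{r=0}^{2q} (-1)^r · C(2q+1, r) · k^r · p^(2q-r) - (p-1). -/
/-!
For `0 < k < p` and odd `n`, the binomial theorem gives `k ^ n + (p - k) ^ n = p * M k` with the
integer `M k` of the right-hand side, while `p ∤ k ^ n`. Hence the remainders of `k ^ n` and
`(p - k) ^ n` mod `p` are nonzero and add up to `p`, so `⌊k ^ n / p⌋ + ⌊(p - k) ^ n / p⌋ = M k - 1`.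
Summing over `k` and reflecting `k ↦ p - k` gives the identity.
-/

open Finset

theorem Int.ediv_add_ediv_of_dvd_add {a b c : ℤ} (hc : 0 < c) (hab : c ∣ a + b) (ha : ¬c ∣ a) :
    a / c + b / c = (a + b) / c - 1 := by
  have ha_pos : 0 < a % c := (Int.emod_pos_of_not_dvd ha).resolve_left hc.ne'
  have hb_nonneg : 0 ≤ b % c := Int.emod_nonneg b hc.ne'
  have hcarry : c ≤ a % c + b % c := by
    by_contra! hlt
    have : (a % c + b % c) % c = a % c + b % c := Int.emod_eq_of_lt (by omega) hlt
    rw [← Int.add_emod, Int.emod_eq_zero_of_dvd hab] at this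
    omega
  rw [Int.add_ediv hc.ne', if_pos (by simpa [abs_of_pos hc] using hcarry),
    Int.sign_eq_one_of_pos hc]
  ring

theorem pow_add_sub_pow_two_mul_add_one {R : Type*} [CommRing R] (x y : R) (q : ℕ) :
    x ^ (2 * q + 1) + (y - x) ^ (2 * q + 1) =
      y * ∑ r ∈ range (2 * q + 1), (-1) ^ r * ((2 * q + 1).choose r) * x ^ r * y ^ (2 * q - r) := by
  have hodd : Odd (2 * q + 1) := odd_two_mul_add_one q
  rw [add_comm, sub_eq_neg_add, add_pow, sum_range_succ, mul_sum, Nat.sub_self, pow_zero, mul_one,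
    Nat.choose_self, Nat.cast_one, mul_one, hodd.neg_pow, neg_add_cancel_right]
  refine sum_congr rfl fun r hr => ?_
  rw [show 2 * q + 1 - r = 2 * q - r + 1 by grind, neg_pow, pow_succ]
  ring

theorem sum_Icc_one_sub_reflect {M : Type*} [AddCommMonoid M] (f : ℕ → M) (n : ℕ) :
    ∑ k ∈ Icc 1 (n - 1), f (n - k) = ∑ k ∈ Icc 1 (n - 1), f k := by
  rcases n with _ | n
  · rfl
  · simpa [Ico_add_one_right_eq_Icc] using sum_Ico_reflect f 1 (Nat.le_succ (n + 1))

theorem pow_ediv_add_sub_pow_ediv_of_prime {p : ℕ} (hp : p.Prime) (q : ℕ) {k : ℕ}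
    (hk0 : 0 < k) (hkp : k < p) :
    (k : ℤ) ^ (2 * q + 1) / p + ((p : ℤ) - k) ^ (2 * q + 1) / p =
      ∑ r ∈ range (2 * q + 1),
        (-1 : ℤ) ^ r * ((2 * q + 1).choose r) * (k : ℤ) ^ r * (p : ℤ) ^ (2 * q - r) - 1 := by
  have hp_ndvd : ¬(p : ℤ) ∣ (k : ℤ) ^ (2 * q + 1) := by
    exact_mod_cast fun h => Nat.not_dvd_of_pos_of_lt hk0 hkp (hp.dvd_of_dvd_pow h)
  have hsum := pow_add_sub_pow_two_mul_add_one (k : ℤ) (p : ℤ) q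
  rw [Int.ediv_add_ediv_of_dvd_add (by exact_mod_cast hp.pos) ⟨_, hsum⟩ hp_ndvd, hsum,
    Int.mul_ediv_cancel_left _ (by exact_mod_cast hp.ne_zero)]

theorem stmt_3_general (p q : ℕ) (hp : p.Prime) :
    2 * ∑ k ∈ Finset.Icc 1 (p - 1), ⌊((k : ℚ) ^ (2 * q + 1)) / p⌋ =
      ∑ k ∈ Finset.Icc 1 (p - 1), ∑ r ∈ Finset.range (2 * q + 1),
        (-1 : ℤ) ^ r * ((2 * q + 1).choose r) * (k : ℤ) ^ r * (p : ℤ) ^ (2 * q - r)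
      - ((p : ℤ) - 1) := by
  have hfloor (k : ℕ) : ⌊((k : ℚ) ^ (2 * q + 1)) / p⌋ = (k : ℤ) ^ (2 * q + 1) / p := by
    simpa using Rat.floor_intCast_div_natCast ((k : ℤ) ^ (2 * q + 1)) p
  have hreflect : ∑ k ∈ Icc 1 (p - 1), (k : ℤ) ^ (2 * q + 1) / p =
      ∑ k ∈ Icc 1 (p - 1), ((p : ℤ) - k) ^ (2 * q + 1) / p := by
    rw [← sum_Icc_one_sub_reflect]
    exact sum_congr rfl fun k hk => by rw [Nat.cast_sub (by grind)]
  have hpair : ∀ k ∈ Icc 1 (p - 1), (k : ℤ) ^ (2 * q + 1) / p + ((p : ℤ) - k) ^ (2 * q + 1) / p =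
      ∑ r ∈ range (2 * q + 1),
        (-1 : ℤ) ^ r * ((2 * q + 1).choose r) * (k : ℤ) ^ r * (p : ℤ) ^ (2 * q - r) - 1 :=
    fun k hk => pow_ediv_add_sub_pow_ediv_of_prime hp q (by grind) (by grind)
  simp only [hfloor]
  rw [two_mul]
  nth_rewrite 2 [hreflect]
  rw [← sum_add_distrib, sum_congr rfl hpair, sum_sub_distrib, sum_const, Nat.card_Icc]
  simp [hp.one_le]

theorem stmt_3 (p q : ℕ) (hp : p.Prime) (hq : 1 ≤ q) :
    2 * ∑ k ∈ Finset.Icc 1 (p - 1), ⌊((k : ℚ) ^ (2 * q + 1)) / p⌋ =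
      ∑ k ∈ Finset.Icc 1 (p - 1), ∑ r ∈ Finset.range (2 * q + 1),
        (-1 : ℤ) ^ r * ((2 * q + 1).choose r) * (k : ℤ) ^ r * (p : ℤ) ^ (2 * q - r)
      - ((p : ℤ) - 1) :=
  stmt_3_general p q hp
end

section
/- For a prime p and integer q ≥ 1, Σ_{k=1}^{p-1} ⌊k^(2q+1)/p⌋ = (p-1)(p^(2q)-1)/2 + (1/2) Σ_{r=1}^{2q} ((-1)^r/(r+1)) · C(2q+1, r) · Σ_{l=0}^{r} C(r+1, l) · B_l · p^(2q+1-l), where B_l are the Bernoulli numbers. -/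
/-!
Write `n = 2q + 1` and `S_r = ∑_{k<p} k^r`. As `n` is odd, `k^n + (p - k)^n ≡ 0 mod p`, and `p ∤ k`,
so the residues of `k^n` and `(p - k)^n` modulo `p` add up to exactly `p`; hence the residues of
`k^n`, `1 ≤ k ≤ p - 1`, sum to `p(p - 1)/2` and the left side is `(S_n - p(p - 1)/2)/p`.
On the right, Faulhaber's formula turns the inner Bernoulli sum into `(r + 1) p^(2q-r) S_r`.
Expanding `∑_{k<p} (p - k)^n = S_n + p^n` binomially gives `∑_r (-1)^r C(n,r) p^(n-r) S_r`, and
splitting off `r = 0` and `r = n` expresses the remaining alternating sum through `S_n`.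
-/

open Finset

theorem Nat.mod_add_mod_eq_of_dvd_add {a b p : ℕ} (hab : p ∣ a + b) (ha : ¬p ∣ a) :
    a % p + b % p = p := by
  have hp : 0 < p := Nat.pos_of_ne_zero fun h => by simp_all
  obtain ⟨c, hc⟩ : p ∣ a % p + b % p := by
    rwa [Nat.dvd_iff_mod_eq_zero, ← Nat.add_mod, ← Nat.dvd_iff_mod_eq_zero]
  have ha' : a % p ≠ 0 := mt Nat.dvd_of_mod_eq_zero ha
  have hlt : a % p + b % p < p * 2 := by linarith [Nat.mod_lt a hp, Nat.mod_lt b hp]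
  rcases c with _ | _ | c
  · omega
  · simpa using hc
  · nlinarith

theorem Nat.Prime.pow_mod_add_sub_pow_mod {p n k : ℕ} (hp : p.Prime) (hn : Odd n)
    (hk₀ : 0 < k) (hkp : k < p) : k ^ n % p + (p - k) ^ n % p = p := by
  refine Nat.mod_add_mod_eq_of_dvd_add ?_ fun h => ?_
  · rw [← ZMod.natCast_eq_zero_iff]
    push_cast [Nat.cast_sub hkp.le]
    rw [ZMod.natCast_self, zero_sub, hn.neg_pow, add_neg_cancel]
  · exact Nat.not_dvd_of_pos_of_lt hk₀ hkp (hp.dvd_of_dvd_pow h)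

theorem Nat.Prime.sum_pow_mod_mul_two {p n : ℕ} (hp : p.Prime) (hn : Odd n) :
    (∑ k ∈ Icc 1 (p - 1), k ^ n % p) * 2 = p * (p - 1) := by
  have hreflect : ∑ k ∈ Icc 1 (p - 1), (p - k) ^ n % p = ∑ k ∈ Icc 1 (p - 1), k ^ n % p :=
    sum_nbij' (p - ·) (p - ·) (by simp; omega) (by simp; omega) (by simp; omega)
      (by simp; omega) (by simp)
  calc (∑ k ∈ Icc 1 (p - 1), k ^ n % p) * 2
      = ∑ k ∈ Icc 1 (p - 1), (k ^ n % p + (p - k) ^ n % p) := by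
        rw [sum_add_distrib, hreflect, mul_two]
    _ = ∑ _k ∈ Icc 1 (p - 1), p := sum_congr rfl fun k hk => by
        rw [mem_Icc] at hk
        exact hp.pow_mod_add_sub_pow_mod hn hk.1 (by omega)
    _ = p * (p - 1) := by simp [mul_comm]

theorem Rat.floor_natCast_div_natCast_eq_sub_mod (m d : ℕ) :
    (⌊(m : ℚ) / d⌋ : ℚ) = ((m : ℚ) - (m % d : ℕ)) / d := by
  rcases Nat.eq_zero_or_pos d with rfl | hd
  · simp
  rw [Rat.floor_natCast_div_natCast, ← Int.natCast_div, Int.cast_natCast,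
    eq_div_iff (by positivity), eq_sub_iff_add_eq, mul_comm]
  exact_mod_cast Nat.div_add_mod m d

theorem sum_Icc_one_pow_eq_sum_range {n : ℕ} (hn : n ≠ 0) (N : ℕ) :
    ∑ k ∈ Icc 1 N, (k : ℚ) ^ n = ∑ k ∈ range (N + 1), (k : ℚ) ^ n := by
  rw [sum_range_eq_add_Ico _ (by omega : 0 < N + 1), Ico_add_one_right_eq_Icc]
  simp [hn]

theorem sum_choose_mul_bernoulli_mul_pow (N : ℕ) {r m : ℕ} (h : r ≤ m) :
    ∑ l ∈ range (r + 1), ((r + 1).choose l : ℚ) * bernoulli l * (N : ℚ) ^ (m + 1 - l) =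
      (r + 1) * (N : ℚ) ^ (m - r) * ∑ k ∈ range N, (k : ℚ) ^ r := by
  rw [sum_range_pow, mul_sum]
  refine sum_congr rfl fun l hl => ?_
  rw [show m + 1 - l = (m - r) + (r + 1 - l) by grind, pow_add]
  field_simp

theorem sum_alternating_choose_mul_sum_range_pow (N n : ℕ) :
    ∑ r ∈ range (n + 1), (-1 : ℚ) ^ r * n.choose r * (N : ℚ) ^ (n - r) *
        ∑ k ∈ range N, (k : ℚ) ^ r =
      ∑ k ∈ range N, ((k : ℚ) + 1) ^ n := by
  calc _ = ∑ k ∈ range N, ((N : ℚ) - k) ^ n := by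
        simp_rw [mul_sum]
        rw [sum_comm]
        refine sum_congr rfl fun k _ => ?_
        rw [sub_eq_neg_add, add_pow]
        exact sum_congr rfl fun r _ => by ring
    _ = ∑ k ∈ range N, ((k : ℚ) + 1) ^ n := by
        rw [← sum_range_reflect]
        refine sum_congr rfl fun k hk => ?_
        rw [mem_range] at hk
        rw [Nat.cast_sub (by omega), Nat.cast_sub (by omega)]
        push_cast
        ring

theorem sum_Icc_alternating_choose_mul_sum_range_pow (N q : ℕ) :
    (N : ℚ) * ∑ r ∈ Icc 1 (2 * q), (-1 : ℚ) ^ r * (2 * q + 1).choose r *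
        (N : ℚ) ^ (2 * q - r) * ∑ k ∈ range N, (k : ℚ) ^ r =
      2 * ∑ k ∈ range N, (k : ℚ) ^ (2 * q + 1) + (N : ℚ) ^ (2 * q + 1) -
        (N : ℚ) ^ (2 * q + 2) := by
  have h := sum_alternating_choose_mul_sum_range_pow N (2 * q + 1)
  rw [sum_range_succ, sum_range_eq_add_Ico _ (by omega), Ico_add_one_right_eq_Icc] at h
  have hshift : ∑ k ∈ range N, ((k : ℚ) + 1) ^ (2 * q + 1) =
      ∑ k ∈ range N, (k : ℚ) ^ (2 * q + 1) + (N : ℚ) ^ (2 * q + 1) := by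
    rw [← sum_range_succ, sum_range_succ']
    simp
  rw [hshift] at h
  rw [mul_sum]
  have hterm : ∀ r ∈ Icc 1 (2 * q), (N : ℚ) * ((-1 : ℚ) ^ r * (2 * q + 1).choose r *
      (N : ℚ) ^ (2 * q - r) * ∑ k ∈ range N, (k : ℚ) ^ r) =
      (-1 : ℚ) ^ r * (2 * q + 1).choose r * (N : ℚ) ^ (2 * q + 1 - r) *
        ∑ k ∈ range N, (k : ℚ) ^ r := by
    intro r hr
    rw [mem_Icc] at hr
    rw [show 2 * q + 1 - r = 2 * q - r + 1 by omega, pow_succ]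
    ring
  rw [sum_congr rfl hterm]
  simp only [pow_zero, Nat.choose_zero_right, Nat.sub_zero, sum_const, card_range, nsmul_eq_mul,
    Nat.choose_self, Nat.sub_self, Nat.cast_one, mul_one, one_mul,
    (odd_two_mul_add_one q).neg_one_pow] at h
  linear_combination h

theorem Nat.Prime.sum_floor_pow_div {p n : ℕ} (hp : p.Prime) (hn : Odd n) :
    ∑ k ∈ Icc 1 (p - 1), (⌊(k : ℚ) ^ n / p⌋ : ℚ) =
      (∑ k ∈ range p, (k : ℚ) ^ n - p * (p - 1) / 2) / p := by
  have hresidues : ∑ k ∈ Icc 1 (p - 1), ((k ^ n % p : ℕ) : ℚ) = p * (p - 1) / 2 := by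
    have h := congrArg (Nat.cast (R := ℚ)) (hp.sum_pow_mod_mul_two hn)
    push_cast [Nat.cast_sub hp.one_le] at h
    linarith
  simp_rw [← Nat.cast_pow, Rat.floor_natCast_div_natCast_eq_sub_mod]
  rw [← sum_div, sum_sub_distrib, hresidues]
  push_cast
  rw [sum_Icc_one_pow_eq_sum_range hn.pos.ne', Nat.sub_add_cancel hp.one_le]

theorem stmt_4_general (p q : ℕ) (hp : p.Prime) :
    (∑ k ∈ Finset.Icc 1 (p - 1), (⌊((k : ℚ) ^ (2 * q + 1)) / p⌋ : ℚ)) =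
      ((p : ℚ) - 1) * ((p : ℚ) ^ (2 * q) - 1) / 2 +
      (1 / 2) * ∑ r ∈ Finset.Icc 1 (2 * q), ((-1 : ℚ) ^ r / (r + 1)) *
        ((2 * q + 1).choose r) *
        ∑ l ∈ Finset.range (r + 1),
          ((r + 1).choose l : ℚ) * bernoulli l * (p : ℚ) ^ (2 * q + 1 - l) := by
  have hp0 : (p : ℚ) ≠ 0 := by exact_mod_cast hp.ne_zero
  have hfaulhaber : ∀ r ∈ Icc 1 (2 * q), (-1 : ℚ) ^ r / (r + 1) * (2 * q + 1).choose r *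
      ∑ l ∈ range (r + 1), ((r + 1).choose l : ℚ) * bernoulli l * (p : ℚ) ^ (2 * q + 1 - l) =
      (-1 : ℚ) ^ r * (2 * q + 1).choose r * (p : ℚ) ^ (2 * q - r) *
        ∑ k ∈ range p, (k : ℚ) ^ r := fun r hr => by
    rw [sum_choose_mul_bernoulli_mul_pow p (mem_Icc.1 hr).2]
    field_simp
  rw [hp.sum_floor_pow_div (odd_two_mul_add_one q), sum_congr rfl hfaulhaber]
  have h := sum_Icc_alternating_choose_mul_sum_range_pow p q
  field_simp
  linear_combination -h

theorem stmt_4 (p q : ℕ) (hp : p.Prime) (hq : 1 ≤ q) :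
    (∑ k ∈ Finset.Icc 1 (p - 1), (⌊((k : ℚ) ^ (2 * q + 1)) / p⌋ : ℚ)) =
      ((p : ℚ) - 1) * ((p : ℚ) ^ (2 * q) - 1) / 2 +
      (1 / 2) * ∑ r ∈ Finset.Icc 1 (2 * q), ((-1 : ℚ) ^ r / (r + 1)) *
        ((2 * q + 1).choose r) *
        ∑ l ∈ Finset.range (r + 1),
          ((r + 1).choose l : ℚ) * bernoulli l * (p : ℚ) ^ (2 * q + 1 - l) :=
  stmt_4_general p q hp
end

section
/- For every prime p ≥ 3 and integer q ≥ 1, 2p(2q+2) divides B_{2q+2}(p+1) + B_{2q+2}(p) - 2B_{2q+2} - p(2q+2)(p^{2q} + p - 1) in the sense that the rational number (B_{2q+2}(p+1) + B_{2q+2}(p) - 2B_{2q+2})/(2p(2q+2)) - (p^{2q}+p-1)/2 is a nonnegative integer. -/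
/-!
By Faulhaber's formula `B_{n+1}(m) = B_{n+1} + (n + 1) ∑_{k < m} k ^ n`, the quantity reduces,
with `e = 2q + 1`, to `(∑_{k < p} k ^ e) / p - (p - 1) / 2`. For odd `e` the residues of `k ^ e`
and `(p - k) ^ e` modulo `p` add up to `p`, so the residues of `k ^ e`, `0 < k < p`, sum to
`p (p - 1) / 2`, and what remains is `∑_{k < p} ⌊k ^ e / p⌋`.
-/

open Finset

namespace Nat

theorem mod_add_mod_eq_of_dvd_add_s16 {a b p : ℕ} (hab : p ∣ a + b) (ha : ¬p ∣ a) :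
    a % p + b % p = p := by
  have hb : ¬p ∣ b := fun hb => ha ((Nat.dvd_add_left hb).mp hab)
  have hp : 0 < p := Nat.pos_of_ne_zero <| by rintro rfl; simp_all
  have ha0 : 0 < a % p := Nat.pos_of_ne_zero fun h => ha (Nat.dvd_of_mod_eq_zero h)
  have hb0 : 0 < b % p := Nat.pos_of_ne_zero fun h => hb (Nat.dvd_of_mod_eq_zero h)
  obtain ⟨c, hc⟩ : p ∣ a % p + b % p := by
    rw [Nat.dvd_iff_mod_eq_zero, ← Nat.add_mod, Nat.mod_eq_zero_of_dvd hab]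
  have hc1 : c = 1 := by
    have := Nat.mod_lt a hp
    have := Nat.mod_lt b hp
    rcases c with _ | _ | c <;> [omega; rfl; nlinarith]
  rw [hc, hc1, mul_one]

theorem pow_mod_add_sub_pow_mod {p e k : ℕ} (hp : p.Prime) (he : Odd e) (hk : 0 < k)
    (hkp : k < p) : k ^ e % p + (p - k) ^ e % p = p := by
  apply mod_add_mod_eq_of_dvd_add_s16
  · simpa [Nat.add_sub_cancel' hkp.le] using he.nat_add_dvd_pow_add_pow k (p - k)
  · exact fun h => (Nat.le_of_dvd hk (hp.dvd_of_dvd_pow h)).not_gt hkp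

theorem two_mul_sum_range_pow_mod {p e : ℕ} (hp : p.Prime) (he : Odd e) :
    2 * ∑ k ∈ range p, k ^ e % p = p * (p - 1) := by
  have hzero : ∑ k ∈ range p, k ^ e % p = ∑ k ∈ Ico 1 p, k ^ e % p := by
    rw [range_eq_Ico, sum_eq_sum_Ico_succ_bot hp.pos, zero_pow he.pos.ne', Nat.zero_mod, zero_add]
  have hreflect : ∑ k ∈ Ico 1 p, (p - k) ^ e % p = ∑ k ∈ Ico 1 p, k ^ e % p := by
    rw [sum_Ico_reflect (fun k => k ^ e % p) 1 (Nat.le_succ p), Nat.add_sub_cancel,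
      Nat.add_sub_cancel_left]
  calc 2 * ∑ k ∈ range p, k ^ e % p
      = ∑ k ∈ Ico 1 p, (k ^ e % p + (p - k) ^ e % p) := by
        rw [sum_add_distrib, hreflect, hzero, two_mul]
    _ = ∑ _k ∈ Ico 1 p, p :=
        sum_congr rfl fun k hk => pow_mod_add_sub_pow_mod hp he (mem_Ico.mp hk).1 (mem_Ico.mp hk).2
    _ = p * (p - 1) := by rw [sum_const, card_Ico, smul_eq_mul, mul_comm]

theorem two_mul_sum_range_pow {p e : ℕ} (hp : p.Prime) (he : Odd e) :
    2 * ∑ k ∈ range p, k ^ e = p * (2 * ∑ k ∈ range p, k ^ e / p + (p - 1)) := by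
  have hdiv : ∑ k ∈ range p, k ^ e =
      p * ∑ k ∈ range p, k ^ e / p + ∑ k ∈ range p, k ^ e % p := by
    rw [mul_sum, ← sum_add_distrib]
    exact sum_congr rfl fun k _ => (Nat.div_add_mod _ _).symm
  rw [hdiv, mul_add, two_mul_sum_range_pow_mod hp he]
  ring

end Nat

theorem Polynomial.bernoulli_succ_eval_add_one_add_eval (n m : ℕ) :
    (bernoulli (n + 1)).eval ((m : ℚ) + 1) + (bernoulli (n + 1)).eval (m : ℚ) -
      2 * _root_.bernoulli (n + 1) =
      (n + 1) * (2 * ∑ k ∈ range m, (k : ℚ) ^ n + (m : ℚ) ^ n) := by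
  have h := bernoulli_succ_eval (m + 1) n
  rw [Nat.cast_succ, sum_range_succ] at h
  rw [h, bernoulli_succ_eval]
  ring

theorem stmt_16_general (p q : ℕ) (hp : p.Prime) :
    ∃ m : ℤ, 0 ≤ m ∧
      ((Polynomial.bernoulli (2 * q + 2)).eval ((p : ℚ) + 1) +
        (Polynomial.bernoulli (2 * q + 2)).eval (p : ℚ) -
        2 * bernoulli (2 * q + 2)) / (2 * p * (2 * q + 2)) -
      ((p : ℚ) ^ (2 * q) + p - 1) / 2 = m := by
  obtain ⟨M, hM⟩ :
      ∃ M : ℕ, 2 * ∑ k ∈ range p, k ^ (2 * q + 1) = p * (2 * M + (p - 1)) :=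
    ⟨_, Nat.two_mul_sum_range_pow hp (odd_two_mul_add_one q)⟩
  refine ⟨M, M.cast_nonneg, ?_⟩
  have hsum := congrArg (Nat.cast : ℕ → ℚ) hM
  push_cast [Nat.cast_sub hp.one_le] at hsum
  have hp0 : (p : ℚ) ≠ 0 := by exact_mod_cast hp.ne_zero
  rw [Polynomial.bernoulli_succ_eval_add_one_add_eval, hsum]
  field_simp
  push_cast
  ring

theorem stmt_16 (p q : ℕ) (hp : p.Prime) (hp3 : 3 ≤ p) (hq : 1 ≤ q) :
    ∃ m : ℤ, 0 ≤ m ∧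
      ((Polynomial.bernoulli (2 * q + 2)).eval ((p : ℚ) + 1) +
        (Polynomial.bernoulli (2 * q + 2)).eval (p : ℚ) -
        2 * bernoulli (2 * q + 2)) / (2 * p * (2 * q + 2)) -
      ((p : ℚ) ^ (2 * q) + p - 1) / 2 = m :=
  stmt_16_general p q hp
end
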